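/- Let ε ∈ (0,1] and N ∈ ℕ. For Δ ∈ {ε, 2ε}, let μ_Δ be the product probability measure on {0,1}^N under which the N coordinates are i.i.d. Bernoulli with success probability p_Δ := 1/(2 + Δ/2). Then for every function β̂ : {0,1}^N → [0,1], max over Δ ∈ {ε, 2ε} of ∫ Exploit_Δ(q_{β̂(ω)}) dμ_Δ(ω) ≥ (ε/30)·exp(−N ε²/8). -/

import Mathlib

/-!
Le Cam's two-point method. The estimator has to choose between the two games
`Δ = 2ε` and `Δ = ε`: for every strategy `q_β`, the exploitability in the first game is at
least `2(1 - β) g` and in the second at least `2β g`, where `g = p_ε - p_{2ε} ≥ ε/15`. Hence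
the two risks add up to at least `2g ∑_ω min (μ_{2ε}{ω}) (μ_ε{ω})`. By Cauchy–Schwarz this
overlap is at least half the square of the Bhattacharyya coefficient `∑_ω √(μ_{2ε}{ω} μ_ε{ω})`,
which tensorises to `ρ^N` with `ρ ≥ exp(-ε²/16)` the coefficient of a single sample.
-/

open MeasureTheory

/-- Exploitability of the column strategy `q` in the perturbed Matching Pennies game
with payoff matrix `[[1+Δ, −1], [−1, 1]]`:
`Exploit_Δ(q) := max{(2+Δ)q − 1, 1 − 2q} − v_Δ` with Nash value `v_Δ := (Δ/2)/(2+Δ/2)`. -/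
noncomputable def exploit (Δ q : ℝ) : ℝ :=
  max ((2 + Δ) * q - 1) (1 - 2 * q) - (Δ / 2) / (2 + Δ / 2)

/-- The interpolating family of column strategies:
`q_β := 1/2 − (2βε/(8+4ε) + (1−β)ε/(8+2ε))`. -/
noncomputable def qfam (ε β : ℝ) : ℝ :=
  1 / 2 - (2 * β * ε / (8 + 4 * ε) + (1 - β) * ε / (8 + 2 * ε))

/-- The product measure on `{0,1}^N` under which the `N` coordinates are i.i.d.
Bernoulli with success probability `p_Δ := 1/(2 + Δ/2)`, i.e. the law of `N` expert
action samples drawn from the Nash strategy of the game with parameter `Δ ≥ 0`. -/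
noncomputable def nashSampleLaw (N : ℕ) (Δ : ℝ) (hΔ : 0 ≤ Δ) : Measure (Fin N → Bool) :=
  Measure.pi fun _ =>
    (PMF.bernoulli (Real.toNNReal (1 / (2 + Δ / 2)))
      (by
        rw [Real.toNNReal_le_one, div_le_one (by linarith)]
        linarith)).toMeasure

open Finset

noncomputable def nashProb (Δ : ℝ) : ℝ := 1 / (2 + Δ / 2)

def bernoulliWeight (p : ℝ) (b : Bool) : ℝ := if b then p else 1 - p

def productWeight {N : ℕ} (p : ℝ) (ω : Fin N → Bool) : ℝ := ∏ i, bernoulliWeight p (ω i)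

noncomputable def bhattacharyya (p q : ℝ) : ℝ :=
  ∑ b, √(bernoulliWeight p b * bernoulliWeight q b)

section Overlap

variable {ι : Type*} (s : Finset ι) {a b : ι → ℝ}

theorem sum_min_le_sum_mul_add_sum_mul {β : ι → ℝ} (hβ : ∀ i, β i ∈ Set.Icc (0 : ℝ) 1) :
    ∑ i ∈ s, min (a i) (b i) ≤ ∑ i ∈ s, a i * (1 - β i) + ∑ i ∈ s, b i * β i := by
  rw [← sum_add_distrib]
  refine sum_le_sum fun i _ => ?_
  obtain ⟨hβ0, hβ1⟩ := hβ i
  nlinarith [min_le_left (a i) (b i), min_le_right (a i) (b i)]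

theorem sq_sum_sqrt_mul_le_sum_min_mul (ha : ∀ i, 0 ≤ a i) (hb : ∀ i, 0 ≤ b i) :
    (∑ i ∈ s, √(a i * b i)) ^ 2 ≤ (∑ i ∈ s, min (a i) (b i)) * ∑ i ∈ s, (a i + b i) := by
  refine sum_sq_le_sum_mul_sum_of_sq_le_mul s (fun i _ => le_min (ha i) (hb i))
    (fun i _ => add_nonneg (ha i) (hb i)) fun i _ => ?_
  rw [Real.sq_sqrt (mul_nonneg (ha i) (hb i)), ← min_mul_max (a i) (b i)]
  exact mul_le_mul_of_nonneg_left (max_le_iff.2 ⟨by linarith [hb i], by linarith [ha i]⟩)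
    (le_min (ha i) (hb i))

end Overlap

theorem two_mul_mul_div_add_le_sqrt_mul {a b : ℝ} (ha : 0 < a) (hb : 0 < b) :
    2 * (a * b) / (a + b) ≤ √(a * b) := by
  rw [Real.le_sqrt (by positivity) (by positivity), div_pow, div_le_iff₀ (by positivity)]
  nlinarith [sq_nonneg (a - b), mul_pos ha hb]

section Bernoulli

variable {p q : ℝ} {N : ℕ}

theorem bernoulliWeight_nonneg (hp : p ∈ Set.Icc (0 : ℝ) 1) (b : Bool) :
    0 ≤ bernoulliWeight p b := by
  cases b <;> simp [bernoulliWeight, hp.1, hp.2]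

theorem productWeight_nonneg (hp : p ∈ Set.Icc (0 : ℝ) 1) (ω : Fin N → Bool) :
    0 ≤ productWeight p ω :=
  prod_nonneg fun i _ => bernoulliWeight_nonneg hp (ω i)

theorem sum_productWeight (p : ℝ) : ∑ ω : Fin N → Bool, productWeight p ω = 1 := by
  simp only [productWeight]
  rw [← Fintype.sum_pow]
  simp [bernoulliWeight]

theorem sum_sqrt_productWeight_mul (hp : p ∈ Set.Icc (0 : ℝ) 1) (hq : q ∈ Set.Icc (0 : ℝ) 1) :
    ∑ ω : Fin N → Bool, √(productWeight p ω * productWeight q ω) = bhattacharyya p q ^ N := by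
  rw [bhattacharyya, Fintype.sum_pow]
  refine sum_congr rfl fun ω _ => ?_
  rw [productWeight, productWeight, ← prod_mul_distrib, Real.sqrt_prod _ fun i _ =>
    mul_nonneg (bernoulliWeight_nonneg hp _) (bernoulliWeight_nonneg hq _)]

end Bernoulli

theorem nashProb_mem_Icc {Δ : ℝ} (hΔ : 0 ≤ Δ) : nashProb Δ ∈ Set.Icc (0 : ℝ) 1 :=
  ⟨by unfold nashProb; positivity, by rw [nashProb, div_le_one (by linarith)]; linarith⟩

instance (N : ℕ) (Δ : ℝ) (hΔ : 0 ≤ Δ) : IsProbabilityMeasure (nashSampleLaw N Δ hΔ) := by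
  unfold nashSampleLaw; infer_instance

theorem nashSampleLaw_real_singleton (N : ℕ) {Δ : ℝ} (hΔ : 0 ≤ Δ) (ω : Fin N → Bool) :
    (nashSampleLaw N Δ hΔ).real {ω} = productWeight (nashProb Δ) ω := by
  obtain ⟨hp0, hp1⟩ := nashProb_mem_Icc hΔ
  rw [measureReal_def, nashSampleLaw, ← Set.univ_pi_singleton ω, Measure.pi_pi,
    ENNReal.toReal_prod]
  refine prod_congr rfl fun i _ => ?_
  rw [PMF.toMeasure_apply_singleton _ _ (measurableSet_singleton _), PMF.bernoulli_apply,
    show (1 / (2 + Δ / 2)).toNNReal = (nashProb Δ).toNNReal from rfl]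
  cases ω i
  · rw [Bool.cond_false, ENNReal.coe_toReal, NNReal.coe_sub (by rwa [Real.toNNReal_le_one]),
      Real.coe_toNNReal _ hp0]
    simp [bernoulliWeight]
  · rw [Bool.cond_true, ENNReal.coe_toReal, Real.coe_toNNReal _ hp0]
    simp [bernoulliWeight]

theorem integral_nashSampleLaw (N : ℕ) {Δ : ℝ} (hΔ : 0 ≤ Δ) (f : (Fin N → Bool) → ℝ) :
    ∫ ω, f ω ∂nashSampleLaw N Δ hΔ = ∑ ω, productWeight (nashProb Δ) ω * f ω := by
  simp only [integral_fintype Integrable.of_finite, smul_eq_mul,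
    nashSampleLaw_real_singleton N hΔ]

section Game

variable {ε : ℝ}

theorem div_fifteen_le_nashProb_sub (hε0 : 0 < ε) (hε1 : ε ≤ 1) :
    ε / 15 ≤ nashProb ε - nashProb (2 * ε) := by
  have hgap : nashProb ε - nashProb (2 * ε) = (ε / 2) / ((2 + ε / 2) * (2 + ε)) := by
    unfold nashProb; field_simp; ring
  have hden : (2 + ε / 2) * (2 + ε) ≤ 15 / 2 := by nlinarith
  rw [hgap, div_le_div_iff₀ (by norm_num) (by positivity)]
  nlinarith [mul_le_mul_of_nonneg_left hden hε0.le]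

theorem two_mul_one_sub_mul_le_exploit_two_mul (hε : 0 < ε) {β : ℝ} (hβ : β ≤ 1) :
    2 * (1 - β) * (nashProb ε - nashProb (2 * ε)) ≤ exploit (2 * ε) (qfam ε β) := by
  have hgap : 0 ≤ (1 - β) * (nashProb ε - nashProb (2 * ε)) := by
    refine mul_nonneg (by linarith) (sub_nonneg.2 ?_)
    unfold nashProb
    gcongr
    linarith
  have hleft : (2 + 2 * ε) * qfam ε β - 1 - (2 * ε / 2) / (2 + 2 * ε / 2)
      = (2 + 2 * ε) * ((1 - β) * (nashProb ε - nashProb (2 * ε))) := by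
    unfold qfam nashProb; field_simp; ring
  unfold exploit
  nlinarith [le_max_left ((2 + 2 * ε) * qfam ε β - 1) (1 - 2 * qfam ε β)]

theorem two_mul_mul_le_exploit (hε : 0 < ε) (β : ℝ) :
    2 * β * (nashProb ε - nashProb (2 * ε)) ≤ exploit ε (qfam ε β) := by
  have hright : 1 - 2 * qfam ε β - (ε / 2) / (2 + ε / 2)
      = 2 * β * (nashProb ε - nashProb (2 * ε)) := by
    unfold qfam nashProb; field_simp; ring
  unfold exploit
  linarith [le_max_right ((2 + ε) * qfam ε β - 1) (1 - 2 * qfam ε β)]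

theorem exp_neg_le_bhattacharyya_nashProb (hε0 : 0 < ε) :
    Real.exp (-(ε ^ 2 / 16)) ≤ bhattacharyya (nashProb (2 * ε)) (nashProb ε) := by
  have hp₁ : nashProb (2 * ε) = 1 / (2 + ε) := by unfold nashProb; ring_nf
  set p₁ := nashProb (2 * ε)
  set p₂ := nashProb ε
  have hp₁0 : 0 < p₁ := by rw [hp₁]; positivity
  have hp₂0 : 0 < p₂ := by unfold p₂ nashProb; positivity
  have hp₁1 : 0 < 1 - p₁ := by rw [hp₁, sub_pos, div_lt_one (by linarith)]; linarith
  have hp₂1 : 0 < 1 - p₂ := by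
    unfold p₂ nashProb; rw [sub_pos, div_lt_one (by linarith)]; linarith
  -- Bound each square root of `bhattacharyya` below by a harmonic mean, which is rational in `ε`.
  have hhm₁ : 2 * (p₁ * p₂) / (p₁ + p₂) = 4 / (8 + 3 * ε) := by
    rw [div_eq_div_iff (by positivity) (by positivity), hp₁]
    unfold p₂ nashProb; field_simp; ring
  have hhm₂ : 2 * ((1 - p₁) * (1 - p₂)) / ((1 - p₁) + (1 - p₂))
      = (4 + 6 * ε + 2 * ε ^ 2) / (8 + 9 * ε + 2 * ε ^ 2) := by
    rw [div_eq_div_iff (by positivity) (by nlinarith), hp₁]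
    unfold p₂ nashProb; field_simp; ring
  have hexp : Real.exp (-(ε ^ 2 / 16)) ≤ 1 / (1 + ε ^ 2 / 16) := by
    rw [Real.exp_neg, one_div]
    exact inv_anti₀ (by positivity) (by linarith [Real.add_one_le_exp (ε ^ 2 / 16)])
  have hrat : 1 / (1 + ε ^ 2 / 16)
      ≤ 4 / (8 + 3 * ε) + (4 + 6 * ε + 2 * ε ^ 2) / (8 + 9 * ε + 2 * ε ^ 2) := by
    rw [div_add_div _ _ (by positivity) (by positivity),
      div_le_div_iff₀ (by positivity) (by positivity)]
    nlinarith [pow_pos hε0 3, pow_pos hε0 4, pow_pos hε0 5]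
  calc Real.exp (-(ε ^ 2 / 16))
      ≤ 4 / (8 + 3 * ε) + (4 + 6 * ε + 2 * ε ^ 2) / (8 + 9 * ε + 2 * ε ^ 2) := hexp.trans hrat
    _ ≤ √(p₁ * p₂) + √((1 - p₁) * (1 - p₂)) := by
      rw [← hhm₁, ← hhm₂]
      exact add_le_add (two_mul_mul_div_add_le_sqrt_mul hp₁0 hp₂0)
        (two_mul_mul_div_add_le_sqrt_mul hp₁1 hp₂1)
    _ = bhattacharyya p₁ p₂ := by simp [bhattacharyya, bernoulliWeight]

theorem exp_le_two_mul_sum_min_productWeight (N : ℕ) (hε0 : 0 < ε) :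
    Real.exp (-(N * ε ^ 2) / 8) ≤ 2 * ∑ ω : Fin N → Bool,
      min (productWeight (nashProb (2 * ε)) ω) (productWeight (nashProb ε) ω) := by
  have hp₁ := nashProb_mem_Icc (by linarith : 0 ≤ 2 * ε)
  have hp₂ := nashProb_mem_Icc hε0.le
  have hρ := exp_neg_le_bhattacharyya_nashProb hε0
  calc Real.exp (-(N * ε ^ 2) / 8) = (Real.exp (-(ε ^ 2 / 16)) ^ N) ^ 2 := by
        rw [← pow_mul, ← Real.exp_nat_mul]; push_cast; ring_nf
    _ ≤ (bhattacharyya (nashProb (2 * ε)) (nashProb ε) ^ N) ^ 2 := by gcongr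
    _ = (∑ ω : Fin N → Bool, √(productWeight _ ω * productWeight _ ω)) ^ 2 := by
        rw [sum_sqrt_productWeight_mul hp₁ hp₂]
    _ ≤ _ * ∑ ω, (productWeight (nashProb (2 * ε)) ω + productWeight (nashProb ε) ω) :=
        sq_sum_sqrt_mul_le_sum_min_mul _ (productWeight_nonneg hp₁) (productWeight_nonneg hp₂)
    _ = _ := by rw [sum_add_distrib, sum_productWeight, sum_productWeight]; ring

end Game

/-- for ε ∈ (0,1], N ∈ ℕ and any estimator `β̂ : {0,1}^N → [0,1]`,
`max_{Δ ∈ {ε, 2ε}} ∫ Exploit_Δ(q_{β̂(ω)}) dμ_Δ(ω) ≥ (ε/30)·exp(−Nε²/8)`,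
where `μ_Δ` is the i.i.d. Bernoulli(`p_Δ`) product law on `{0,1}^N`. -/
theorem stmt_15 (ε : ℝ) (hε : ε ∈ Set.Ioc (0 : ℝ) 1) (N : ℕ)
    (βhat : (Fin N → Bool) → ℝ) (hβhat : ∀ ω, βhat ω ∈ Set.Icc (0 : ℝ) 1) :
    (ε / 30) * Real.exp (-(N * ε ^ 2) / 8) ≤
      max
        (∫ ω, exploit (2 * ε) (qfam ε (βhat ω))
          ∂(nashSampleLaw N (2 * ε) (by linarith [hε.1])))
        (∫ ω, exploit ε (qfam ε (βhat ω))
          ∂(nashSampleLaw N ε hε.1.le)) := by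
  obtain ⟨hε0, hε1⟩ := hε
  set I₁ := ∫ ω, exploit (2 * ε) (qfam ε (βhat ω)) ∂(nashSampleLaw N (2 * ε) (by linarith))
  set I₂ := ∫ ω, exploit ε (qfam ε (βhat ω)) ∂(nashSampleLaw N ε hε0.le)
  set g := nashProb ε - nashProb (2 * ε)
  set a : (Fin N → Bool) → ℝ := productWeight (nashProb (2 * ε))
  set b : (Fin N → Bool) → ℝ := productWeight (nashProb ε)
  have ha := productWeight_nonneg (N := N) (nashProb_mem_Icc (by linarith : 0 ≤ 2 * ε))
  have hb := productWeight_nonneg (N := N) (nashProb_mem_Icc hε0.le)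
  have hI₁ : 2 * g * ∑ ω, a ω * (1 - βhat ω) ≤ I₁ := by
    rw [show I₁ = _ from integral_nashSampleLaw .., mul_sum]
    refine sum_le_sum fun ω _ => ?_
    have := two_mul_one_sub_mul_le_exploit_two_mul hε0 (hβhat ω).2
    nlinarith [ha ω]
  have hI₂ : 2 * g * ∑ ω, b ω * βhat ω ≤ I₂ := by
    rw [show I₂ = _ from integral_nashSampleLaw .., mul_sum]
    refine sum_le_sum fun ω _ => ?_
    have := two_mul_mul_le_exploit hε0 (βhat ω)
    nlinarith [hb ω]
  have hoverlap := exp_le_two_mul_sum_min_productWeight N hε0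
  have hg := div_fifteen_le_nashProb_sub hε0 hε1
  have hmin := sum_min_le_sum_mul_add_sum_mul univ hβhat (a := a) (b := b)
  calc ε / 30 * Real.exp (-(N * ε ^ 2) / 8)
      ≤ g * ∑ ω, min (a ω) (b ω) := by nlinarith [Real.exp_nonneg (-(N * ε ^ 2) / 8)]
    _ ≤ g * (∑ ω, a ω * (1 - βhat ω) + ∑ ω, b ω * βhat ω) := by gcongr; linarith
    _ ≤ (I₁ + I₂) / 2 := by linarith
    _ ≤ max I₁ I₂ := by linarith [le_max_left I₁ I₂, le_max_right I₁ I₂]
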